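/- arXiv:1009.0943 — 5 statements merged into one kernel-verified Lean document; each statement's English description precedes it below -/
import Mathlib

section
/- Let m ≥ 1 and let p(t) = t^n + a_{n-1}t^{n-1} + ⋯ + a_1 t + a_0 be a monic polynomial with complex coefficients (write a_n = 1). Let R = ℂ[t, t^{-1}, u | u^m = p(t)], i.e. R = ℂ[t,t^{-1}][u]/(u^m − p(t)). Then for every integer i, in Ω¹_R/dR one has ((m+1)n + im)·(class of t^{n+i-1}u dt) = − Σ_{j=0}^{n-1} ((m+1)j + mi) a_j · (class of t^{i+j-1}u dt). -/
/-!
The relation is the vanishing of the exact form `m · d(tⁱ u^{m+1})` in `Ω¹_R/dR`, made explicit.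
Since `u^m = p(t)`, differentiating gives `m u^m du = u p'(t) dt`, hence
`m · d(tⁱ u^{m+1}) = (m+1) tⁱ u p'(t) dt + m i t^{i-1} u p(t) dt
  = Σⱼ ((m+1) j + m i) aⱼ t^{i+j-1} u dt`,
and the term `j = n` (where `aₙ = 1`) is the left-hand side.
-/

noncomputable section
open Polynomial LaurentPolynomial

/-- The polynomial `X^m − p(t)` over `ℂ[t,t⁻¹]`, where `p(t) = Σ_{j=0}^{n} a_j t^j`. -/
def relPoly (m n : ℕ) (a : ℕ → ℂ) : Polynomial (LaurentPolynomial ℂ) :=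
  (X : Polynomial (LaurentPolynomial ℂ)) ^ m -
    Polynomial.C (∑ j ∈ Finset.range (n + 1), LaurentPolynomial.C (a j) * T (j : ℤ))

/-- The ring `R = ℂ[t,t⁻¹][u]/(u^m − p(t))`. -/
abbrev CurrentRing (m n : ℕ) (a : ℕ → ℂ) : Type := AdjoinRoot (relPoly m n a)

/-- The subspace `dR ⊆ Ω¹_R` of exact differentials. -/
def dR0 (m n : ℕ) (a : ℕ → ℂ) : Submodule ℂ (KaehlerDifferential ℂ (CurrentRing m n a)) :=
  LinearMap.range (KaehlerDifferential.D ℂ (CurrentRing m n a)).toLinearMap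

/-- The class of `t^k·u·dt` in `Ω¹_R/dR`. -/
def w0cls (m n : ℕ) (a : ℕ → ℂ) (k : ℤ) :
    KaehlerDifferential ℂ (CurrentRing m n a) ⧸ dR0 m n a :=
  Submodule.Quotient.mk
    ((AdjoinRoot.of (relPoly m n a) (T k) * AdjoinRoot.root (relPoly m n a)) •
      KaehlerDifferential.D ℂ (CurrentRing m n a) (AdjoinRoot.of (relPoly m n a) (T 1)))

open Finset

namespace Derivation

variable {R A M : Type*} [CommRing R] [CommRing A] [Algebra R A] [AddCommGroup M] [Module A M]
  [Module R M] (D : Derivation R A M)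

theorem leibniz_units_zpow (t : Aˣ) (k : ℤ) :
    D ↑(t ^ k) = k • (↑(t ^ (k - 1)) : A) • D t := by
  set g : ℤ → M := fun k => D ↑(t ^ k) - k • (↑(t ^ (k - 1)) : A) • D t with hg
  -- The defect `g` vanishes at `0` and is multiplied by the unit `t` at each step.
  have step (k : ℤ) : g (k + 1) = (t : A) • g k := by
    simp only [hg, zpow_add_one, Units.val_mul, leibniz, add_sub_cancel_right, smul_sub,
      smul_comm (t : A) (k : ℤ), smul_smul]
    rw [← Units.val_mul, ← zpow_one_add, add_sub_cancel, add_smul, one_smul]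
    abel
  suffices g k = 0 from sub_eq_zero.mp this
  induction k using Int.induction_on with
  | zero => simp [hg]
  | succ k ih => rw [step, ih, smul_zero]
  | pred k ih =>
    rw [← sub_add_cancel (-(k : ℤ)) 1, step] at ih
    simpa [smul_smul] using congrArg ((↑t⁻¹ : A) • ·) ih

theorem nsmul_pow_smul_eq_smul_map_pow (u : A) (m : ℕ) :
    m • (u ^ m • D u) = u • D (u ^ m) := by
  cases m with
  | zero => simp
  | succ m => rw [leibniz_pow, smul_comm u, smul_smul, ← pow_succ', Nat.add_sub_cancel]

theorem nsmul_map_units_zpow_mul_pow_succ {u P : A} {m : ℕ} (hu : u ^ m = P) (t : Aˣ) (i : ℤ) :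
    m • D (↑(t ^ i) * u ^ (m + 1)) =
      (m + 1) • (↑(t ^ i) * u) • D P + (m * i) • (↑(t ^ (i - 1)) * u * P) • D t := by
  have hDu := nsmul_pow_smul_eq_smul_map_pow D u m
  rw [hu] at hDu
  rw [leibniz, leibniz_pow, leibniz_units_zpow, Nat.add_sub_cancel, pow_succ', hu]
  linear_combination (norm := module) ((m + 1 : ℕ) • (↑(t ^ i) : A)) • hDu

theorem map_sum_smul_units_zpow (t : Aˣ) (s : Finset ℕ) (a : ℕ → R) :
    D (∑ j ∈ s, a j • (↑(t ^ (j : ℤ)) : A)) =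
      ∑ j ∈ s, ((j : R) * a j) • (↑(t ^ ((j : ℤ) - 1)) : A) • D t := by
  rw [map_sum]
  refine sum_congr rfl fun j _ => ?_
  rw [map_smul, leibniz_units_zpow, mul_smul, smul_comm, natCast_zsmul, Nat.cast_smul_eq_nsmul]

variable [IsScalarTower R A M]

theorem nsmul_map_units_zpow_mul_pow_succ_of_pow_eq_sum {u : A} {m : ℕ} {t : Aˣ} {s : Finset ℕ}
    {a : ℕ → R} (hu : u ^ m = ∑ j ∈ s, a j • (↑(t ^ (j : ℤ)) : A)) (i : ℤ) :
    m • D (↑(t ^ i) * u ^ (m + 1)) =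
      ∑ j ∈ s, (((m + 1) * j + m * i) * a j) • (↑(t ^ (i + j - 1)) * u) • D t := by
  rw [nsmul_map_units_zpow_mul_pow_succ D hu, map_sum_smul_units_zpow, mul_sum, sum_smul]
  simp only [smul_sum]
  rw [← sum_add_distrib]
  refine sum_congr rfl fun j _ => ?_
  have h₁ : (↑(t ^ i) : A) * ↑(t ^ ((j : ℤ) - 1)) = ↑(t ^ (i + j - 1)) := by
    rw [← Units.val_mul, ← zpow_add, add_sub_assoc]
  have h₂ : (↑(t ^ (i - 1)) : A) * ↑(t ^ (j : ℤ)) = ↑(t ^ (i + j - 1)) := by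
    rw [← Units.val_mul, ← zpow_add, sub_add_eq_add_sub]
  rw [Algebra.smul_def (a j), ← Int.cast_smul_eq_zsmul R]
  linear_combination (norm := module)
    (algebraMap R A (((m : R) + 1) * j * a j) * u) • h₁ • D (t : A) +
      (algebraMap R A ((m : R) * i * a j) * u) • h₂ • D (t : A)

end Derivation

theorem LaurentPolynomial.T_eq_val_unitOfInvertible_zpow {R : Type*} [Semiring R] (k : ℤ) :
    (T k : R[T;T⁻¹]) = ↑(unitOfInvertible (T 1 : R[T;T⁻¹]) ^ k) := by
  induction k using Int.induction_on with
  | zero => rw [T_zero, zpow_zero, Units.val_one]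
  | succ k ih => rw [T_add, zpow_add_one, Units.val_mul, ih]; rfl
  | pred k ih => rw [sub_eq_add_neg, T_add, zpow_add, zpow_neg_one, Units.val_mul, ih]; rfl

namespace CurrentRing

variable (m n : ℕ) (a : ℕ → ℂ)

def t : (CurrentRing m n a)ˣ :=
  Units.map (AdjoinRoot.of (relPoly m n a)).toMonoidHom (unitOfInvertible (T 1))

theorem of_T (k : ℤ) : AdjoinRoot.of (relPoly m n a) (T k) = ↑(t m n a ^ k) := by
  rw [t, ← map_zpow, Units.coe_map, ← T_eq_val_unitOfInvertible_zpow]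
  rfl

theorem root_pow :
    AdjoinRoot.root (relPoly m n a) ^ m =
      ∑ j ∈ Finset.range (n + 1), a j • (↑(t m n a ^ (j : ℤ)) : CurrentRing m n a) := by
  have h : (X ^ m - Polynomial.C (∑ j ∈ Finset.range (n + 1), LaurentPolynomial.C (a j) *
      T (j : ℤ))).eval₂ (AdjoinRoot.of (relPoly m n a)) (AdjoinRoot.root (relPoly m n a)) = 0 :=
    AdjoinRoot.eval₂_root _
  rw [eval₂_sub, eval₂_X_pow, Polynomial.eval₂_C, sub_eq_zero, map_sum] at h
  rw [h]
  refine sum_congr rfl fun j _ => ?_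
  rw [map_mul, of_T, Algebra.smul_def]
  rfl

end CurrentRing

theorem stmt0_general (m n : ℕ) (a : ℕ → ℂ) (han : a n = 1) (i : ℤ) :
    (((m : ℂ) + 1) * (n : ℂ) + (i : ℂ) * (m : ℂ)) • w0cls m n a ((n : ℤ) + i - 1) =
      - ∑ j ∈ Finset.range n,
          ((((m : ℂ) + 1) * (j : ℂ) + (m : ℂ) * (i : ℂ)) * a j) • w0cls m n a (i + (j : ℤ) - 1) := by
  set D := KaehlerDifferential.D ℂ (CurrentRing m n a)
  set u := AdjoinRoot.root (relPoly m n a)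
  set t := CurrentRing.t m n a
  have hw (k : ℤ) : w0cls m n a k = (dR0 m n a).mkQ ((↑(t ^ k) * u) • D t) := by
    rw [w0cls, CurrentRing.of_T, CurrentRing.of_T, zpow_one]
    rfl
  have hexact : ∑ j ∈ Finset.range (n + 1),
      ((((m : ℂ) + 1) * (j : ℂ) + (m : ℂ) * (i : ℂ)) * a j) • w0cls m n a (i + (j : ℤ) - 1) = 0 := by
    simp only [hw, ← map_smul, ← map_sum]
    rw [← D.nsmul_map_units_zpow_mul_pow_succ_of_pow_eq_sum (CurrentRing.root_pow m n a) i,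
      ← map_nsmul, Submodule.mkQ_apply, Submodule.Quotient.mk_eq_zero]
    exact LinearMap.mem_range_self _ _
  rw [Finset.sum_range_succ, han, mul_one] at hexact
  rw [add_comm (n : ℤ) i, mul_comm (i : ℂ)]
  linear_combination (norm := module) hexact

/-- Let `m ≥ 1` and `p(t) = t^n + a_{n-1}t^{n-1} + ⋯ + a_0` monic (`a_n = 1`).  In `Ω¹_R/dR`
for `R = ℂ[t,t⁻¹][u]/(u^m − p(t))` one has, for every `i : ℤ`,
`((m+1)n + im)·(t^{n+i−1}u dt) = − Σ_{j=0}^{n−1} ((m+1)j + mi)·a_j·(t^{i+j−1}u dt)`. -/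
theorem stmt0 (m n : ℕ) (hm : 1 ≤ m) (hn : 1 ≤ n) (a : ℕ → ℂ) (han : a n = 1) (i : ℤ) :
    (((m : ℂ) + 1) * (n : ℂ) + (i : ℂ) * (m : ℂ)) • w0cls m n a ((n : ℤ) + i - 1) =
      - ∑ j ∈ Finset.range n,
          ((((m : ℂ) + 1) * (j : ℂ) + (m : ℂ) * (i : ℂ)) * a j) • w0cls m n a (i + (j : ℤ) - 1) :=
  stmt0_general m n a han i
end
end

section
/- Let c ∈ ℂ with c² ≠ 1. Define (P_{−1,k})_{k ≥ −4} by the initial values P_{−1,−4} = P_{−1,−3} = P_{−1,−2} = 0, P_{−1,−1} = 1 and the recursion (6+2k)P_{−1,k} = 4kc·P_{−1,k−2} − 2(k−3)·P_{−1,k−4} for k ≥ 0, and let P(z) = Σ_{k ≥ 0} P_{−1,k−4} z^k ∈ ℂ[[z]]. Let S ∈ ℂ[[z]] be the unique formal power series with constant term 1 satisfying S² = 1 − 2cz² + z⁴. Then (c² − 1)·P(z) = cz − z³ − cz·S(z). -/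
/-!
Both sides solve the recurrence `(n + 3) u (n + 4) = 2 c n u (n + 2) - (n - 3) u n`, whose
solutions are determined by their first four terms, and these agree. For the left side the
recurrence is the hypothesis on `P`. For the right side it comes from a differential equation:
the recurrence says that `L u` has no terms beyond `z³`, for the first-order operator
`L = f · z d/dz - (f + z f'/2)` with `f = 1 - 2cz² + z⁴`, and `L (z S) = 0` since `2 f S' = f' S`.
-/

noncomputable section
open PowerSeries

theorem coeff_X_mul_derivative {R : Type*} [CommRing R] (g : R⟦X⟧) (n : ℕ) :
    coeff n (X * d⁄dX R g) = n * coeff n g := by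
  rcases n with _ | n
  · simp
  · rw [coeff_succ_X_mul, coeff_derivative, mul_comm, Nat.cast_succ]

section Recurrence

variable {K : Type*} [Field K]

def Recurrence (c : K) (u : ℕ → K) : Prop :=
  ∀ n : ℕ, ((n : K) + 3) * u (n + 4) = 2 * c * n * u (n + 2) - ((n : K) - 3) * u n

theorem Recurrence.const_mul {c : K} {u : ℕ → K} (hu : Recurrence c u) (a : K) :
    Recurrence c (fun n => a * u n) := fun n => by
  linear_combination a * hu n

theorem Recurrence.eq_of_forall_lt_four [CharZero K] {c : K} {u v : ℕ → K} (hu : Recurrence c u)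
    (hv : Recurrence c v) (h : ∀ n < 4, u n = v n) : u = v := by
  funext n
  induction n using Nat.strong_induction_on with
  | _ n ih =>
    rcases lt_or_ge n 4 with hn | hn
    · exact h n hn
    · obtain ⟨m, rfl⟩ := Nat.exists_eq_add_of_le' hn
      have hm : (m : K) + 3 ≠ 0 := by exact_mod_cast Nat.succ_ne_zero (m + 2)
      apply mul_left_cancel₀ hm
      rw [hu m, hv m, ih m (by omega), ih (m + 2) (by omega)]

theorem recurrence_comp_sub_four [CharZero K] {c : K} {P : ℤ → K}
    (hrec : ∀ k : ℤ, 0 ≤ k →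
      ((6 : K) + 2 * (k : K)) * P k = 4 * (k : K) * c * P (k - 2) - 2 * ((k : K) - 3) * P (k - 4)) :
    Recurrence c (fun n => P ((n : ℤ) - 4)) := fun n => by
  have h := hrec n (Int.natCast_nonneg n)
  push_cast at h ⊢
  simp only [add_sub_cancel_right, show (n : ℤ) + 2 - 4 = n - 2 by ring]
  linear_combination h / 2

/-- The operator `L = f · z d/dz - (f + z f'/2)`, `f = 1 - 2cz² + z⁴`. -/
def recurrenceOp (c : K) (g : K⟦X⟧) : K⟦X⟧ :=
  (1 - C (2 * c) * X ^ 2 + X ^ 4) * (X * d⁄dX K g) - (1 - C (4 * c) * X ^ 2 + 3 * X ^ 4) * g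

theorem coeff_add_four_recurrenceOp (c : K) (g : K⟦X⟧) (n : ℕ) :
    coeff (n + 4) (recurrenceOp c g) = ((n : K) + 3) * coeff (n + 4) g
      - 2 * c * n * coeff (n + 2) g + ((n : K) - 3) * coeff n g := by
  have h3 : (3 : K⟦X⟧) = C 3 := (map_ofNat C 3).symm
  simp only [recurrenceOp, h3, sub_mul, add_mul, one_mul, mul_assoc, map_sub, map_add, coeff_C_mul,
    coeff_X_pow_mul', coeff_X_mul_derivative, mul_left_comm _ (X ^ _)]
  rw [if_pos (by omega), if_pos (by omega), Nat.add_sub_cancel, show n + 4 - 2 = n + 2 by omega]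
  push_cast
  ring

theorem recurrence_coeff_of_recurrenceOp_eq {c : K} {g : K⟦X⟧} {a : K}
    (h : recurrenceOp c g = C a * X ^ 3) : Recurrence c (fun n => coeff n g) := fun n => by
  have hn := coeff_add_four_recurrenceOp c g n
  rw [h, coeff_C_mul_X_pow, if_neg (by omega)] at hn
  linear_combination -hn

theorem recurrenceOp_eq_of_sq_eq [CharZero K] {c : K} {S : K⟦X⟧}
    (hS : S ^ 2 = 1 - C (2 * c) * X ^ 2 + X ^ 4) :
    recurrenceOp c (C c * X - X ^ 3 - C c * X * S) = C (2 * (c ^ 2 - 1)) * X ^ 3 := by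
  have hd := congrArg (d⁄dX K) hS
  simp only [recurrenceOp, Derivation.leibniz, Derivation.leibniz_pow, map_add, map_sub,
    smul_eq_mul, derivative_C, derivative_X, Derivation.map_one_eq_zero, nsmul_eq_mul] at hd ⊢
  simp only [map_mul, map_sub, map_pow, map_one, map_ofNat] at hS hd ⊢
  have h2 : (2 : K⟦X⟧) ≠ 0 := by
    rw [← map_ofNat (C (R := K)) 2]
    exact (map_ne_zero C).mpr two_ne_zero
  apply mul_left_cancel₀ h2
  linear_combination (2 * C c * X ^ 2 * d⁄dX K S) * hS - (C c * X ^ 2 * S) * hd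

theorem coeff_one_two_of_sq_eq [CharZero K] {c : K} {S : K⟦X⟧} (hS0 : constantCoeff S = 1)
    (hS : S ^ 2 = 1 - C (2 * c) * X ^ 2 + X ^ 4) : coeff 1 S = 0 ∧ coeff 2 S = -c := by
  have h1 := congrArg (coeff 1) hS
  have h2 := congrArg (coeff 2) hS
  rw [sq S, coeff_mul] at h1 h2
  simp [Finset.Nat.antidiagonal_succ, coeff_X_pow, coeff_one, coeff_C_mul, mul_assoc, hS0] at h1 h2
  rw [h1] at h2
  exact ⟨h1, by linear_combination h2 / 2⟩

end Recurrence

theorem stmt13_general (c : ℂ) (P : ℤ → ℂ)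
    (h4 : P (-4) = 0) (h3 : P (-3) = 0) (h2 : P (-2) = 0) (h1 : P (-1) = 1)
    (hrec : ∀ k : ℤ, 0 ≤ k →
      ((6 : ℂ) + 2 * (k : ℂ)) * P k = 4 * (k : ℂ) * c * P (k - 2) - 2 * ((k : ℂ) - 3) * P (k - 4))
    (S : PowerSeries ℂ) (hS0 : PowerSeries.constantCoeff S = 1)
    (hS : S ^ 2 = 1 - PowerSeries.C (2 * c) * X ^ 2 + X ^ 4) :
    PowerSeries.C (c ^ 2 - 1) * PowerSeries.mk (fun k => P ((k : ℤ) - 4)) =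
      PowerSeries.C c * X - X ^ 3 - PowerSeries.C c * X * S := by
  have hL : Recurrence c (fun n => coeff n (C (c ^ 2 - 1) * mk fun k => P ((k : ℤ) - 4))) := by
    simpa only [coeff_C_mul, coeff_mk] using (recurrence_comp_sub_four hrec).const_mul (c ^ 2 - 1)
  have hR := recurrence_coeff_of_recurrenceOp_eq (recurrenceOp_eq_of_sq_eq hS)
  obtain ⟨hS1, hS2⟩ := coeff_one_two_of_sq_eq hS0 hS
  ext n
  refine congrFun (hL.eq_of_forall_lt_four hR fun n hn => ?_) n
  interval_cases n <;> simp only [coeff_C_mul, coeff_mk] <;>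
    simp [coeff_X_pow, mul_assoc, hS0, hS1, hS2, h1, h2, h3, h4]
  ring

/-- Let `c² ≠ 1` and let `(P_{−1,k})_{k ≥ −4}` have initial values
`P_{−1,−4} = P_{−1,−3} = P_{−1,−2} = 0`, `P_{−1,−1} = 1` and satisfy the recursion
`(6+2k)P_k = 4kc·P_{k−2} − 2(k−3)·P_{k−4}` for `k ≥ 0`.  If `S ∈ ℂ⟦z⟧` is the power series
with constant term `1` and `S² = 1 − 2cz² + z⁴`, then the generating series
`P(z) = Σ_{k ≥ 0} P_{−1,k−4} z^k` satisfies `(c² − 1)·P(z) = cz − z³ − cz·S(z)`. -/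
theorem stmt13 (c : ℂ) (hc : c ^ 2 ≠ 1) (P : ℤ → ℂ)
    (h4 : P (-4) = 0) (h3 : P (-3) = 0) (h2 : P (-2) = 0) (h1 : P (-1) = 1)
    (hrec : ∀ k : ℤ, 0 ≤ k →
      ((6 : ℂ) + 2 * (k : ℂ)) * P k = 4 * (k : ℂ) * c * P (k - 2) - 2 * ((k : ℂ) - 3) * P (k - 4))
    (S : PowerSeries ℂ) (hS0 : PowerSeries.constantCoeff S = 1)
    (hS : S ^ 2 = 1 - PowerSeries.C (2 * c) * X ^ 2 + X ^ 4) :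
    PowerSeries.C (c ^ 2 - 1) * PowerSeries.mk (fun k => P ((k : ℤ) - 4)) =
      PowerSeries.C c * X - X ^ 3 - PowerSeries.C c * X * S :=
  stmt13_general c P h4 h3 h2 h1 hrec S hS0 hS
end
end

section
/- Let c ∈ ℂ. Let (P_{−1,k})_{k ≥ −4} and (P_{−3,k})_{k ≥ −4} be the sequences each satisfying the recursion (6+2k)P_k = 4kc·P_{k−2} − 2(k−3)·P_{k−4} for k ≥ 0, with initial values P_{−1,−4} = P_{−1,−3} = P_{−1,−2} = 0, P_{−1,−1} = 1 and P_{−3,−4} = 0, P_{−3,−3} = 1, P_{−3,−2} = P_{−3,−1} = 0 respectively. Then P_{−1,2n−3} = c·P_{−3,2n−3} for every integer n ≥ 2, and moreover P_{−1,2m} = 0 and P_{−3,2m} = 0 for every integer m ≥ 0. -/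
/-!
The recursion links `P_k` only to `P_{k-2}` and `P_{k-4}`, and its leading coefficient `6 + 2k`
never vanishes for `k ≥ 0`, so two consecutive zeros of the same parity propagate upwards. This
gives the even claims at once from `P_{-4} = P_{-2} = 0`. For the odd ones, the difference
`Q = P_{-1} - c P_{-3}` again satisfies the recursion and has `Q_1 = Q_3 = 0`: indeed
`2 Q_1 = c Q_{-1} + Q_{-3} = c - c`, and the step `k = 3` kills the `Q_{-1}` term, leaving `Q_3 = c Q_1`.
-/

variable {K : Type*} [Field K]

def SatisfiesRec (c : K) (P : ℤ → K) : Prop :=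
  ∀ k : ℤ, 0 ≤ k →
    ((6 : K) + 2 * (k : K)) * P k = 4 * (k : K) * c * P (k - 2) - 2 * ((k : K) - 3) * P (k - 4)

namespace SatisfiesRec

variable {c : K} {P R : ℤ → K}

theorem sub_mul (hP : SatisfiesRec c P) (hR : SatisfiesRec c R) (a : K) :
    SatisfiesRec c fun k => P k - a * R k := fun k hk => by
  linear_combination hP k hk - a * hR k hk

variable [CharZero K]

theorem two_mul_apply_one (hP : SatisfiesRec c P) : 2 * P 1 = c * P (-1) + P (-3) := by
  have h := hP 1 zero_le_one
  norm_num at h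
  linear_combination h / 4

theorem apply_three (hP : SatisfiesRec c P) : P 3 = c * P 1 := by
  have h := hP 3 (by norm_num)
  norm_num at h
  linear_combination h / 12

theorem eq_zero_of_sub_two_of_sub_four (hP : SatisfiesRec c P) {k : ℤ} (hk : 0 ≤ k)
    (h2 : P (k - 2) = 0) (h4 : P (k - 4) = 0) : P k = 0 := by
  have hcoeff : (6 : K) + 2 * (k : K) ≠ 0 := by
    exact_mod_cast (show (6 + 2 * k : ℤ) ≠ 0 by omega)
  have h := hP k hk
  rw [h2, h4, mul_zero, mul_zero, sub_zero] at h
  exact (mul_eq_zero.mp h).resolve_left hcoeff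

theorem eq_zero_add_two_mul (hP : SatisfiesRec c P) {j : ℤ} (hj : -4 ≤ j)
    (h0 : P j = 0) (h2 : P (j + 2) = 0) (n : ℕ) : P (j + 2 * n) = 0 := by
  suffices ∀ n : ℕ, P (j + 2 * n) = 0 ∧ P (j + 2 * n + 2) = 0 from (this n).1
  intro n
  induction n with
  | zero => simpa using ⟨h0, h2⟩
  | succ n ih =>
    have hnext : P (j + 2 * n + 4) = 0 :=
      hP.eq_zero_of_sub_two_of_sub_four (by omega) (by simpa [add_sub_assoc] using ih.2)
        (by simpa [add_sub_assoc] using ih.1)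
    push_cast
    exact ⟨by simpa [mul_add, ← add_assoc] using ih.2,
      by simpa [mul_add, add_assoc] using hnext⟩

end SatisfiesRec

/-- Let `(P_{−1,k})` and `(P_{−3,k})` both satisfy the recursion
`(6+2k)P_k = 4kc·P_{k−2} − 2(k−3)·P_{k−4}` for `k ≥ 0`, with initial values
`P_{−1,−4} = P_{−1,−3} = P_{−1,−2} = 0, P_{−1,−1} = 1` and
`P_{−3,−4} = 0, P_{−3,−3} = 1, P_{−3,−2} = P_{−3,−1} = 0` respectively.  Then
`P_{−1,2n−3} = c·P_{−3,2n−3}` for every `n ≥ 2`, and `P_{−1,2m} = P_{−3,2m} = 0`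
for every `m ≥ 0`. -/
theorem stmt15 (c : ℂ) (P1 P3 : ℤ → ℂ)
    (h14 : P1 (-4) = 0) (h13 : P1 (-3) = 0) (h12 : P1 (-2) = 0) (h11 : P1 (-1) = 1)
    (h34 : P3 (-4) = 0) (h33 : P3 (-3) = 1) (h32 : P3 (-2) = 0) (h31 : P3 (-1) = 0)
    (hrec1 : ∀ k : ℤ, 0 ≤ k →
      ((6 : ℂ) + 2 * (k : ℂ)) * P1 k = 4 * (k : ℂ) * c * P1 (k - 2) - 2 * ((k : ℂ) - 3) * P1 (k - 4))
    (hrec3 : ∀ k : ℤ, 0 ≤ k →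
      ((6 : ℂ) + 2 * (k : ℂ)) * P3 k = 4 * (k : ℂ) * c * P3 (k - 2) - 2 * ((k : ℂ) - 3) * P3 (k - 4)) :
    (∀ n : ℤ, 2 ≤ n → P1 (2 * n - 3) = c * P3 (2 * n - 3)) ∧
      (∀ m : ℤ, 0 ≤ m → P1 (2 * m) = 0 ∧ P3 (2 * m) = 0) := by
  have hP1 : SatisfiesRec c P1 := hrec1
  have hP3 : SatisfiesRec c P3 := hrec3
  have hQ := hP1.sub_mul hP3 c
  have hQ1 : P1 1 - c * P3 1 = 0 := by
    have h := hQ.two_mul_apply_one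
    simp only [h11, h13, h31, h33] at h
    linear_combination h / 2
  have hQ3 : P1 3 - c * P3 3 = 0 := by
    rw [hQ.apply_three, hQ1, mul_zero]
  refine ⟨fun n hn => ?_, fun m hm => ?_⟩
  · have h := hQ.eq_zero_add_two_mul (by norm_num) hQ1 hQ3 (n - 2).toNat
    rw [Int.toNat_of_nonneg (by omega), show (1 + 2 * (n - 2) : ℤ) = 2 * n - 3 by ring] at h
    exact sub_eq_zero.mp h
  · have key : (-4 + 2 * ((m + 2).toNat : ℤ) : ℤ) = 2 * m := by omega
    exact ⟨key ▸ hP1.eq_zero_add_two_mul le_rfl h14 (by simpa using h12) _,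
      key ▸ hP3.eq_zero_add_two_mul le_rfl h34 (by simpa using h32) _⟩
end

section
/- Define a sequence of polynomials (P_{−3,k})_{k ≥ −4} in ℂ[X] by the initial values P_{−3,−4} = 0, P_{−3,−3} = 1, P_{−3,−2} = 0, P_{−3,−1} = 0 and the recursion (6+2k)P_{−3,k} = 4kX·P_{−3,k−2} − 2(k−3)·P_{−3,k−4} for k ≥ 0. Then for every integer n ≥ 2 the polynomial P = P_{−3,2n−3} satisfies the second order differential equation (X² − 1)·P″ + 4X·P′ − (n+1)(n−2)·P = 0 in ℂ[X], where ′ denotes the formal polynomial derivative. -/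
open Polynomial

/-!
Write `Q n = P_{−3,2n−3}`. The odd-index recursion becomes the three-term recursion
`(n+1) Q_{n+1} = (2n−1) X Q_n − (n−2) Q_{n−1}`, and by induction on `n` every `Q_n` satisfies
the two first-order relations
`n X Q_n' = (n−2) Q_{n−1}' + n(n−2) Q_n` and `(X²−1) Q_n' = (n−2)(X Q_n − Q_{n−1})`,
starting from the constant `Q_2 = P_{−3,1} = 1/2`. Differentiating the second relation and
eliminating `Q_{n−1}'` with the first gives the differential equation.
-/

section ThreeTermRecursion

variable {R : Type*} [CommRing R]

theorem ode_of_derivative_relations {p q : R[X]} {a : R}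
    (hA : C a * X * derivative q = C (a - 2) * derivative p + C (a * (a - 2)) * q)
    (hB : (X ^ 2 - 1) * derivative q = C (a - 2) * (X * q - p)) :
    (X ^ 2 - 1) * derivative (derivative q) + 4 * X * derivative q
      - C ((a + 1) * (a - 2)) * q = 0 := by
  have hB' := congrArg derivative hB
  simp only [derivative_mul, derivative_sub, derivative_C, derivative_X, derivative_X_pow,
    derivative_one, zero_mul, zero_add, sub_zero] at hB'
  simp only [map_add, map_sub, map_mul, map_one, map_ofNat, Nat.cast_ofNat] at hA hB' ⊢
  linear_combination hB' + hA

variable [IsDomain R]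

theorem derivative_relations_succ {p q r : R[X]} {a : R} (ha : a + 1 ≠ 0)
    (hrec : C (a + 1) * r = C (2 * a - 1) * X * q - C (a - 2) * p)
    (hA : C a * X * derivative q = C (a - 2) * derivative p + C (a * (a - 2)) * q)
    (hB : (X ^ 2 - 1) * derivative q = C (a - 2) * (X * q - p)) :
    C (a + 1) * X * derivative r = C (a + 1 - 2) * derivative q + C ((a + 1) * (a + 1 - 2)) * r ∧
      (X ^ 2 - 1) * derivative r = C (a + 1 - 2) * (X * r - q) := by
  have hrec' := congrArg derivative hrec
  simp only [derivative_mul, derivative_sub, derivative_C, derivative_X, zero_mul, zero_add,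
    mul_one] at hrec'
  have hne : C (a + 1) ≠ 0 := C_ne_zero.mpr ha
  simp only [map_add, map_sub, map_mul, map_one, map_ofNat] at hrec hrec' hA hB hne ⊢
  constructor
  · apply mul_left_cancel₀ hne
    linear_combination (C a + 1) * (X * hrec' - (C a - 1) * hrec + X * hA + (C a - 1) * hB)
  · apply mul_left_cancel₀ hne
    linear_combination (X ^ 2 - 1) * hrec' - (C a - 1) * X * hrec + (X ^ 2 - 1) * hA
      + (C a - 1) * X * hB

variable [CharZero R]

theorem derivative_relations_of_recursion {Q : ℕ → R[X]} (hQ2 : derivative (Q 2) = 0)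
    (hrec : ∀ n : ℕ, 2 ≤ n →
      C ((n : R) + 1) * Q (n + 1) = C (2 * (n : R) - 1) * X * Q n - C ((n : R) - 2) * Q (n - 1))
    (n : ℕ) (hn : 2 ≤ n) :
    C (n : R) * X * derivative (Q n) =
        C ((n : R) - 2) * derivative (Q (n - 1)) + C ((n : R) * ((n : R) - 2)) * Q n ∧
      (X ^ 2 - 1) * derivative (Q n) = C ((n : R) - 2) * (X * Q n - Q (n - 1)) := by
  induction n, hn using Nat.le_induction with
  | base => simp [hQ2]
  | succ n hn ih =>
    have h := derivative_relations_succ (Nat.cast_add_one_ne_zero n) (hrec n hn) ih.1 ih.2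
    simpa using h

theorem ode_of_recursion {Q : ℕ → R[X]} (hQ2 : derivative (Q 2) = 0)
    (hrec : ∀ n : ℕ, 2 ≤ n →
      C ((n : R) + 1) * Q (n + 1) = C (2 * (n : R) - 1) * X * Q n - C ((n : R) - 2) * Q (n - 1))
    (n : ℕ) (hn : 2 ≤ n) :
    (X ^ 2 - 1) * derivative (derivative (Q n)) + 4 * X * derivative (Q n)
      - C (((n : R) + 1) * ((n : R) - 2)) * Q n = 0 :=
  have h := derivative_relations_of_recursion hQ2 hrec n hn
  ode_of_derivative_relations h.1 h.2

end ThreeTermRecursion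

theorem odd_index_recursion (P : ℤ → ℂ[X])
    (hrec : ∀ k : ℤ, 0 ≤ k →
      C ((6 : ℂ) + 2 * (k : ℂ)) * P k =
        C (4 * (k : ℂ)) * X * P (k - 2) - C (2 * ((k : ℂ) - 3)) * P (k - 4))
    (n : ℕ) (hn : 1 ≤ n) :
    C ((n : ℂ) + 1) * P (2 * (n + 1 : ℕ) - 3) =
      C (2 * (n : ℂ) - 1) * X * P (2 * n - 3) - C ((n : ℂ) - 2) * P (2 * (n - 1 : ℕ) - 3) := by
  have h := hrec (2 * n - 1) (by omega)
  rw [show 2 * (n : ℤ) - 1 - 2 = 2 * n - 3 by ring, show 2 * (n : ℤ) - 1 - 4 = 2 * n - 5 by ring]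
    at h
  rw [show 2 * ((n + 1 : ℕ) : ℤ) - 3 = 2 * n - 1 by push_cast; ring,
    show 2 * ((n - 1 : ℕ) : ℤ) - 3 = 2 * n - 5 by push_cast [Nat.cast_sub hn]; ring]
  apply mul_left_cancel₀ (C_ne_zero.mpr (by norm_num : (4 : ℂ) ≠ 0))
  simp only [map_add, map_sub, map_mul, map_ofNat, map_one, Int.cast_sub, Int.cast_mul,
    Int.cast_natCast, Int.cast_ofNat, Int.cast_one] at h ⊢
  linear_combination h

theorem stmt16_general (P : ℤ → Polynomial ℂ)
    (h3 : P (-3) = 1) (h1 : P (-1) = 0)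
    (hrec : ∀ k : ℤ, 0 ≤ k →
      Polynomial.C ((6 : ℂ) + 2 * (k : ℂ)) * P k =
        Polynomial.C (4 * (k : ℂ)) * X * P (k - 2) -
          Polynomial.C (2 * ((k : ℂ) - 3)) * P (k - 4)) :
    ∀ n : ℤ, 2 ≤ n →
      (X ^ 2 - 1) * derivative (derivative (P (2 * n - 3)))
        + 4 * X * derivative (P (2 * n - 3))
        - Polynomial.C (((n : ℂ) + 1) * ((n : ℂ) - 2)) * P (2 * n - 3) = 0 := by
  have hP1 : derivative (P 1) = 0 := by
    have h := hrec 1 zero_le_one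
    norm_num [h1, h3] at h
    simpa using congrArg derivative h
  have hQ := ode_of_recursion (Q := fun m => P (2 * m - 3)) (by simpa using hP1)
    (fun n hn => odd_index_recursion P hrec n (by omega))
  intro n hn
  lift n to ℕ using by omega
  simpa using hQ n (by omega)

/-- Let `(P_{−3,k})_{k ≥ −4}` be the sequence of polynomials in `ℂ[X]` with initial values
`P_{−3,−4} = 0, P_{−3,−3} = 1, P_{−3,−2} = 0, P_{−3,−1} = 0` and satisfying the recursion
`(6+2k)P_{−3,k} = 4kX·P_{−3,k−2} − 2(k−3)·P_{−3,k−4}` for `k ≥ 0`.  Then for every `n ≥ 2`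
the polynomial `P = P_{−3,2n−3}` satisfies `(X² − 1)P″ + 4X·P′ − (n+1)(n−2)·P = 0`. -/
theorem stmt16 (P : ℤ → Polynomial ℂ)
    (h4 : P (-4) = 0) (h3 : P (-3) = 1) (h2 : P (-2) = 0) (h1 : P (-1) = 0)
    (hrec : ∀ k : ℤ, 0 ≤ k →
      Polynomial.C ((6 : ℂ) + 2 * (k : ℂ)) * P k =
        Polynomial.C (4 * (k : ℂ)) * X * P (k - 2) -
          Polynomial.C (2 * ((k : ℂ) - 3)) * P (k - 4)) :
    ∀ n : ℤ, 2 ≤ n →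
      (X ^ 2 - 1) * derivative (derivative (P (2 * n - 3)))
        + 4 * X * derivative (P (2 * n - 3))
        - Polynomial.C (((n : ℂ) + 1) * ((n : ℂ) - 2)) * P (2 * n - 3) = 0 :=
  stmt16_general P h3 h1 hrec
end

section
/- Define a sequence of polynomials (P_{−1,k})_{k ≥ −4} in ℂ[X] by the initial values P_{−1,−4} = P_{−1,−3} = P_{−1,−2} = 0, P_{−1,−1} = 1 and the recursion (6+2k)P_{−1,k} = 4kX·P_{−1,k−2} − 2(k−3)·P_{−1,k−4} for k ≥ 0. Then for every integer n ≥ 2 the polynomial P = P_{−1,2n−3} satisfies the second order differential equation (X⁴ − X²)·P″ + 2X(X² + 1)·P′ + (−X²·n(n−1) − 2)·P = 0 in ℂ[X], where ′ denotes the formal polynomial derivative. -/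
/-!
With `Q m = P_{−1,2m−3}` the odd-indexed recursion is the three-term recurrence
`(m + 2) Q_{m+2} = (2m + 1) X Q_{m+1} − (m − 1) Q_m`, `Q_0 = 0`, `Q_1 = 1`. A two-step induction
shows that for `m ≥ 1` the first-order lowering relation
`X (X² − 1) Q_{m+1}' = (m X² − 1) Q_{m+1} − (m − 1) X Q_m` holds. Differentiating it for `Q_{m+3}`
and eliminating `Q_{m+2}'`, `Q_{m+2}` and `Q_{m+1}` with the lowering relation for `Q_{m+2}` and
the recurrence yields `X² − 1` times the differential equation.
-/

noncomputable section
open Polynomial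

def odeOperator (n : ℂ) (p : ℂ[X]) : ℂ[X] :=
  (X ^ 4 - X ^ 2) * derivative (derivative p) + 2 * X * (X ^ 2 + 1) * derivative p
    + (-(X ^ 2) * C (n * (n - 1)) - 2) * p

def Lowering (Q : ℕ → ℂ[X]) (m : ℕ) : Prop :=
  X * (X ^ 2 - 1) * derivative (Q (m + 1)) =
    ((m : ℂ[X]) * X ^ 2 - 1) * Q (m + 1) - ((m : ℂ[X]) - 1) * X * Q m

section Recurrence

variable {Q : ℕ → ℂ[X]}
  (hrec : ∀ m : ℕ, ((m : ℂ[X]) + 2) * Q (m + 2) =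
    (2 * (m : ℂ[X]) + 1) * X * Q (m + 1) - ((m : ℂ[X]) - 1) * Q m)
include hrec

theorem lowering_add_three {m : ℕ} (h₁ : Lowering Q (m + 1)) (h₂ : Lowering Q (m + 2)) :
    Lowering Q (m + 3) := by
  unfold Lowering at *
  have r₂ := hrec (m + 1)
  have r₃ := hrec (m + 2)
  have d₃ := congrArg derivative r₃
  simp only [derivative_mul, derivative_sub, derivative_add, derivative_natCast, derivative_ofNat,
    derivative_X, derivative_one] at d₃
  push_cast at *
  have hm : (m : ℂ[X]) + 4 ≠ 0 := by exact_mod_cast (Nat.succ_ne_zero (m + 3))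
  refine mul_left_cancel₀ hm ?_
  linear_combination X * (X ^ 2 - 1) * d₃ + ((1 - ((m : ℂ[X]) + 4)) * X ^ 2 + 1) * r₃
    + (2 * ((m : ℂ[X]) + 4) - 3) * X * h₂ - ((m : ℂ[X]) + 1) * h₁ + ((m : ℂ[X]) + 1) * X * r₂

theorem odeOperator_eq_zero_of_lowering {m : ℕ} (h₁ : Lowering Q (m + 1))
    (h₂ : Lowering Q (m + 2)) : odeOperator ((m + 3 : ℕ) : ℂ) (Q (m + 3)) = 0 := by
  unfold Lowering odeOperator at *
  have r := hrec (m + 1)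
  have d₂ := congrArg derivative h₂
  simp only [derivative_mul, derivative_sub, derivative_natCast, derivative_X, derivative_one,
    derivative_X_sq, map_ofNat] at d₂
  simp only [map_mul, map_sub, map_natCast, map_one]
  push_cast at *
  have hX : (X ^ 2 - 1 : ℂ[X]) ≠ 0 := by simpa using X_pow_sub_C_ne_zero two_pos (1 : ℂ)
  refine (mul_eq_zero.mp ?_).resolve_left hX
  linear_combination (X ^ 2 - 1) * X * d₂ + (((m : ℂ[X]) + 1) * X ^ 2 + 2) * h₂
    - ((m : ℂ[X]) + 1) * X * h₁ + ((m : ℂ[X]) + 1) * X ^ 2 * r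

variable (h₀ : Q 0 = 0) (h₁ : Q 1 = 1)
include h₀ h₁

theorem two_mul_apply_two : 2 * Q 2 = X := by
  simpa [h₀, h₁] using hrec 0

theorem lowering_one : Lowering Q 1 := by
  have hQ₂ := two_mul_apply_two hrec h₀ h₁
  have dQ₂ := congrArg derivative hQ₂
  simp only [derivative_mul, derivative_ofNat, derivative_X, zero_mul, zero_add] at dQ₂
  unfold Lowering
  refine mul_left_cancel₀ (two_ne_zero' ℂ[X]) ?_
  push_cast
  linear_combination X * (X ^ 2 - 1) * dQ₂ - (X ^ 2 - 1) * hQ₂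

theorem lowering_two : Lowering Q 2 := by
  have hQ₂ := two_mul_apply_two hrec h₀ h₁
  have dQ₂ := congrArg derivative hQ₂
  simp only [derivative_mul, derivative_ofNat, derivative_X, zero_mul, zero_add] at dQ₂
  have hQ₃ : Q 3 = X * Q 2 := by
    have r := hrec 1
    simp only [Nat.cast_one, sub_self, zero_mul, sub_zero] at r
    refine mul_left_cancel₀ (by norm_num : (3 : ℂ[X]) ≠ 0) ?_
    linear_combination r
  unfold Lowering
  rw [hQ₃, derivative_mul, derivative_X]
  refine mul_left_cancel₀ (two_ne_zero' ℂ[X]) ?_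
  push_cast
  linear_combination X ^ 2 * (X ^ 2 - 1) * dQ₂ - X * (X ^ 2 - 1) * hQ₂

theorem lowering_add_one (m : ℕ) : Lowering Q (m + 1) := by
  induction m using Nat.twoStepInduction with
  | zero => exact lowering_one hrec h₀ h₁
  | one => exact lowering_two hrec h₀ h₁
  | more m ih₁ ih₂ => exact lowering_add_three hrec ih₁ ih₂

theorem odeOperator_eq_zero (m : ℕ) (hm : 2 ≤ m) : odeOperator (m : ℂ) (Q m) = 0 := by
  obtain ⟨k, rfl⟩ := Nat.exists_eq_add_of_le' hm
  cases k with
  | zero =>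
    have hQ₂ := two_mul_apply_two hrec h₀ h₁
    have dQ₂ := congrArg derivative hQ₂
    have ddQ₂ := congrArg derivative dQ₂
    simp only [derivative_mul, derivative_ofNat, derivative_X, derivative_one, zero_mul,
      zero_add] at dQ₂ ddQ₂
    unfold odeOperator
    refine mul_left_cancel₀ (two_ne_zero' ℂ[X]) ?_
    simp only [map_mul, map_sub, map_natCast, map_one]
    push_cast
    linear_combination (X ^ 4 - X ^ 2) * ddQ₂ + 2 * X * (X ^ 2 + 1) * dQ₂ - (2 * X ^ 2 + 2) * hQ₂
  | succ k =>
    exact odeOperator_eq_zero_of_lowering hrec (lowering_add_one hrec h₀ h₁ k)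
      (lowering_add_one hrec h₀ h₁ (k + 1))

end Recurrence

theorem stmt17_general (P : ℤ → Polynomial ℂ)
    (h3 : P (-3) = 0) (h1 : P (-1) = 1)
    (hrec : ∀ k : ℤ, 0 ≤ k →
      Polynomial.C ((6 : ℂ) + 2 * (k : ℂ)) * P k =
        Polynomial.C (4 * (k : ℂ)) * X * P (k - 2) -
          Polynomial.C (2 * ((k : ℂ) - 3)) * P (k - 4)) :
    ∀ n : ℤ, 2 ≤ n →
      (X ^ 4 - X ^ 2) * derivative (derivative (P (2 * n - 3)))
        + 2 * X * (X ^ 2 + 1) * derivative (P (2 * n - 3))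
        + (-(X ^ 2) * Polynomial.C ((n : ℂ) * ((n : ℂ) - 1)) - 2) * P (2 * n - 3) = 0 := by
  set Q : ℕ → ℂ[X] := fun k => P (2 * k - 3) with hQ
  have hQrec : ∀ k : ℕ, ((k : ℂ[X]) + 2) * Q (k + 2) =
      (2 * (k : ℂ[X]) + 1) * X * Q (k + 1) - ((k : ℂ[X]) - 1) * Q k := by
    intro k
    have h := hrec (2 * k + 1) (by positivity)
    simp only [hQ]
    rw [show 2 * ((k + 2 : ℕ) : ℤ) - 3 = 2 * k + 1 by push_cast; ring,
      show 2 * ((k + 1 : ℕ) : ℤ) - 3 = 2 * k + 1 - 2 by push_cast; ring,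
      show 2 * (k : ℤ) - 3 = 2 * k + 1 - 4 by ring]
    simp only [map_add, map_mul, map_sub, map_ofNat, map_intCast] at h
    push_cast at h
    refine mul_left_cancel₀ (by norm_num : (4 : ℂ[X]) ≠ 0) ?_
    linear_combination h
  intro n hn
  obtain ⟨m, rfl⟩ : ∃ m : ℕ, n = m + 2 := ⟨(n - 2).toNat, by omega⟩
  have hode := odeOperator_eq_zero hQrec (by simpa [hQ] using h3) (by simpa [hQ] using h1) (m + 2)
    (by omega)
  simpa [odeOperator, hQ] using hode

/-- Let `(P_{−1,k})_{k ≥ −4}` be the sequence of polynomials in `ℂ[X]` with initial values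
`P_{−1,−4} = P_{−1,−3} = P_{−1,−2} = 0, P_{−1,−1} = 1` and satisfying the recursion
`(6+2k)P_{−1,k} = 4kX·P_{−1,k−2} − 2(k−3)·P_{−1,k−4}` for `k ≥ 0`.  Then for every `n ≥ 2`
the polynomial `P = P_{−1,2n−3}` satisfies
`(X⁴ − X²)P″ + 2X(X² + 1)P′ + (−X²·n(n−1) − 2)·P = 0`. -/
theorem stmt17 (P : ℤ → Polynomial ℂ)
    (h4 : P (-4) = 0) (h3 : P (-3) = 0) (h2 : P (-2) = 0) (h1 : P (-1) = 1)
    (hrec : ∀ k : ℤ, 0 ≤ k →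
      Polynomial.C ((6 : ℂ) + 2 * (k : ℂ)) * P k =
        Polynomial.C (4 * (k : ℂ)) * X * P (k - 2) -
          Polynomial.C (2 * ((k : ℂ) - 3)) * P (k - 4)) :
    ∀ n : ℤ, 2 ≤ n →
      (X ^ 4 - X ^ 2) * derivative (derivative (P (2 * n - 3)))
        + 2 * X * (X ^ 2 + 1) * derivative (P (2 * n - 3))
        + (-(X ^ 2) * Polynomial.C ((n : ℂ) * ((n : ℂ) - 1)) - 2) * P (2 * n - 3) = 0 :=
  stmt17_general P h3 h1 hrec
end
end
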